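/- arXiv:1912.13345 — 2 statements merged into one kernel-verified Lean document; each statement's English description precedes it below -/
import Mathlib

section
/- For q ≥ 2 and w ≥ 0, the function r_w(x) = φ_w(x)/x, where φ_w(x) = sgn(x+w)|x+w|^q + sgn(x-w)|x-w|^q (with r_w(0) defined as the limit at 0), is an even function on ℝ which is nondecreasing and convex on (0, ∞). -/
/-! φ_w has derivative g(s) = q(|s + w|^(q-1) + |s - w|^(q-1)) and vanishes at 0, so
r_w(x) = φ_w(x)/x = ∫₀¹ g(xu) du. For q ≥ 2 the exponent q - 1 is at least 1, so g is
even and convex, hence nondecreasing on [0, ∞); both properties survive the averaging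
x ↦ ∫₀¹ g(xu) du. -/

open Real Set Filter Topology intervalIntegral

lemma Real.sign_mul_abs_rpow (x q : ℝ) : Real.sign x * |x| ^ q = x * |x| ^ (q - 1) := by
  rcases eq_or_ne x 0 with rfl | hx
  · simp
  have hsign : Real.sign x * |x| = x := by
    rcases hx.lt_or_gt with h | h
    · rw [Real.sign_of_neg h, abs_of_neg h]
      ring
    · rw [Real.sign_of_pos h, abs_of_pos h, one_mul]
  have hpow : |x| ^ q = |x| ^ (q - 1) * |x| := by
    rw [← rpow_add_one (abs_ne_zero.2 hx), sub_add_cancel]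
  rw [hpow]
  linear_combination |x| ^ (q - 1) * hsign

lemma hasDerivAt_sign_mul_abs_rpow {q : ℝ} (hq : 1 < q) (t : ℝ) :
    HasDerivAt (fun s => Real.sign s * |s| ^ q) (q * |t| ^ (q - 1)) t := by
  rcases lt_trichotomy t 0 with ht | rfl | ht
  · have h : HasDerivAt (fun s => -(-s) ^ q) (q * |t| ^ (q - 1)) t := by
      rw [abs_of_neg ht]
      exact ((hasDerivAt_rpow_const (Or.inl (neg_pos.2 ht).ne')).comp t
        (hasDerivAt_neg t)).neg.congr_deriv (by ring)
    refine h.congr_of_eventuallyEq ?_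
    filter_upwards [eventually_lt_nhds ht] with s hs
    rw [Real.sign_of_neg hs, abs_of_neg hs, neg_one_mul]
  · have hq' : q - 1 ≠ 0 := by linarith
    rw [hasDerivAt_iff_tendsto_slope, abs_zero, zero_rpow hq', mul_zero]
    have hcont : ContinuousAt (fun s : ℝ => |s| ^ (q - 1)) 0 :=
      (continuousAt_rpow_const _ _ (Or.inr (by linarith))).comp continuous_abs.continuousAt
    have hlim := hcont.tendsto.mono_left (nhdsWithin_le_nhds (s := {(0 : ℝ)}ᶜ))
    rw [abs_zero, zero_rpow hq'] at hlim
    refine hlim.congr' ?_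
    filter_upwards [self_mem_nhdsWithin] with s (hs : s ≠ 0)
    rw [slope_def_field, Real.sign_mul_abs_rpow, Real.sign_zero, zero_mul, sub_zero, sub_zero,
      mul_div_cancel_left₀ _ hs]
  · refine (hasDerivAt_rpow_const (Or.inl ht.ne')).congr_of_eventuallyEq ?_ |>.congr_deriv
      (by rw [abs_of_pos ht])
    filter_upwards [eventually_gt_nhds ht] with s hs
    rw [Real.sign_of_pos hs, abs_of_pos hs, one_mul]

lemma convexOn_univ_dist_rpow {E : Type*} [NormedAddCommGroup E] [NormedSpace ℝ E] (z : E)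
    {p : ℝ} (hp : 1 ≤ p) : ConvexOn ℝ univ fun x => dist x z ^ p := by
  refine ⟨convex_univ, fun x _ y _ a b ha hb hab => ?_⟩
  calc dist (a • x + b • y) z ^ p ≤ (a • dist x z + b • dist y z) ^ p :=
        rpow_le_rpow dist_nonneg ((convexOn_univ_dist z).2 trivial trivial ha hb hab)
          (by linarith)
    _ ≤ a • dist x z ^ p + b • dist y z ^ p :=
        (convexOn_rpow hp).2 dist_nonneg dist_nonneg ha hb hab

lemma ConvexOn.monotoneOn_Ici_of_even {f : ℝ → ℝ} (hf : ConvexOn ℝ univ f)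
    (heven : ∀ x, f (-x) = f x) : MonotoneOn f (Ici 0) := by
  intro a (ha : 0 ≤ a) b _ hab
  have hseg : a ∈ segment ℝ (-b) b := by
    rw [segment_eq_Icc (by linarith)]
    exact ⟨by linarith, hab⟩
  simpa [heven] using hf.le_on_segment trivial trivial hseg

lemma div_eq_integral_comp_mul_of_hasDerivAt {F f : ℝ → ℝ} (hF : ∀ x, HasDerivAt F (f x) x)
    (hf : Continuous f) (hF0 : F 0 = 0) {x : ℝ} (hx : x ≠ 0) :
    F x / x = ∫ u in (0 : ℝ)..1, f (x * u) := by
  rw [integral_comp_mul_left f hx, mul_zero, mul_one,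
    integral_eq_sub_of_hasDerivAt (fun s _ => hF s) (hf.intervalIntegrable _ _), hF0, sub_zero,
    smul_eq_mul, div_eq_inv_mul]

section Averaging

variable {g : ℝ → ℝ}

lemma monotoneOn_integral_comp_mul (hg : Continuous g) (hmono : MonotoneOn g (Ici 0)) :
    MonotoneOn (fun x => ∫ u in (0 : ℝ)..1, g (x * u)) (Ici 0) := by
  intro x (hx : 0 ≤ x) y (hy : 0 ≤ y) hxy
  refine integral_mono_on zero_le_one ((hg.comp (continuous_const_mul x)).intervalIntegrable _ _)
    ((hg.comp (continuous_const_mul y)).intervalIntegrable _ _) fun u hu => ?_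
  exact hmono (mul_nonneg hx hu.1) (mul_nonneg hy hu.1) (mul_le_mul_of_nonneg_right hxy hu.1)

lemma ConvexOn.integral_comp_mul (hg : Continuous g) (hconv : ConvexOn ℝ univ g) :
    ConvexOn ℝ univ fun x => ∫ u in (0 : ℝ)..1, g (x * u) := by
  refine ⟨convex_univ, fun x _ y _ a b ha hb hab => ?_⟩
  have hI : ∀ c : ℝ, IntervalIntegrable (fun u => g (c * u)) MeasureTheory.volume 0 1 :=
    fun c => (hg.comp (continuous_const_mul c)).intervalIntegrable _ _
  calc ∫ u in (0 : ℝ)..1, g ((a • x + b • y) * u)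
      ≤ ∫ u in (0 : ℝ)..1, (a * g (x * u) + b * g (y * u)) := by
        refine integral_mono_on zero_le_one (hI _)
          (((hI x).const_mul a).add ((hI y).const_mul b)) fun u _ => ?_
        have h := hconv.2 (mem_univ (x * u)) (mem_univ (y * u)) ha hb hab
        simp only [smul_eq_mul] at h ⊢
        rwa [show (a * x + b * y) * u = a * (x * u) + b * (y * u) by ring]
    _ = a • (∫ u in (0 : ℝ)..1, g (x * u)) + b • ∫ u in (0 : ℝ)..1, g (y * u) := by
        rw [integral_add ((hI x).const_mul a) ((hI y).const_mul b), integral_const_mul,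
          integral_const_mul, smul_eq_mul, smul_eq_mul]

end Averaging

theorem stmt_1_general (q w : ℝ) (hq : 2 ≤ q)
    (φ r : ℝ → ℝ)
    (hφ : ∀ x : ℝ, φ x = Real.sign (x + w) * |x + w| ^ q + Real.sign (x - w) * |x - w| ^ q)
    (hr : ∀ x : ℝ, x ≠ 0 → r x = φ x / x) :
    (∀ x : ℝ, r (-x) = r x) ∧ MonotoneOn r (Set.Ioi 0) ∧ ConvexOn ℝ (Set.Ioi 0) r := by
  set g : ℝ → ℝ := fun s => q * (|s + w| ^ (q - 1) + |s - w| ^ (q - 1)) with hg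
  have hg_cont : Continuous g := by
    fun_prop (disch := linarith)
  have hg_conv : ConvexOn ℝ univ g := by
    refine (((convexOn_univ_dist_rpow (-w) (p := q - 1) (by linarith)).add
      (convexOn_univ_dist_rpow w (p := q - 1) (by linarith))).smul (by linarith : (0 : ℝ) ≤ q)).congr ?_
    intro s _
    simp [hg, Real.dist_eq]
  have hg_even : ∀ s, g (-s) = g s := by
    intro s
    simp only [hg, show -s + w = -(s - w) by ring, show -s - w = -(s + w) by ring, abs_neg]
    ring
  have hφ_deriv : ∀ s, HasDerivAt φ (g s) s := by
    intro s
    rw [funext hφ]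
    exact (((hasDerivAt_sign_mul_abs_rpow (by linarith) (s + w)).comp_add_const s w).add
      ((hasDerivAt_sign_mul_abs_rpow (by linarith) (s - w)).comp_sub_const s w)).congr_deriv
      (by ring)
  have hφ0 : φ 0 = 0 := by
    rw [hφ, zero_sub, zero_add, Real.sign_neg, abs_neg]
    ring
  have hr_avg : ∀ x, x ≠ 0 → r x = ∫ u in (0 : ℝ)..1, g (x * u) := fun x hx =>
    (hr x hx).trans (div_eq_integral_comp_mul_of_hasDerivAt hφ_deriv hg_cont hφ0 hx)
  have hr_eqOn : EqOn (fun x => ∫ u in (0 : ℝ)..1, g (x * u)) r (Ioi 0) := fun x hx =>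
    (hr_avg x (ne_of_gt hx)).symm
  refine ⟨fun x => ?_, ?_, ?_⟩
  · rcases eq_or_ne x 0 with rfl | hx
    · rw [neg_zero]
    · simp_rw [hr_avg x hx, hr_avg (-x) (neg_ne_zero.2 hx), neg_mul, hg_even]
  · exact ((monotoneOn_integral_comp_mul hg_cont
      (hg_conv.monotoneOn_Ici_of_even hg_even)).mono Ioi_subset_Ici_self).congr hr_eqOn
  · exact ((hg_conv.integral_comp_mul hg_cont).subset (subset_univ _) (convex_Ioi 0)).congr
      hr_eqOn

theorem stmt_1 (q w : ℝ) (hq : 2 ≤ q) (hw : 0 ≤ w)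
    (φ r : ℝ → ℝ)
    (hφ : ∀ x : ℝ, φ x = Real.sign (x + w) * |x + w| ^ q + Real.sign (x - w) * |x - w| ^ q)
    (hr : ∀ x : ℝ, x ≠ 0 → r x = φ x / x)
    (hr0 : ContinuousAt r 0) :
    (∀ x : ℝ, r (-x) = r x) ∧ MonotoneOn r (Set.Ioi 0) ∧ ConvexOn ℝ (Set.Ioi 0) r :=
  stmt_1_general q w hq φ r hφ hr
end

section
/- Let p ≥ 3 and a ∈ ℝ. The function h_a(x) = |a + √x|^p + |a − √x|^p is convex and nondecreasing on [0, ∞). -/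
/-! Write `f = |·|^p`, `φ = f'` and `ψ = φ' = p (p - 1) |·|^(p - 2)`; `ψ` is convex because
`p ≥ 3`. At `x = t²` the derivative of `h_a` is `(φ (a + t) - φ (a - t)) / (2 t)`, which is
nonnegative since `φ` is monotone. It is also nondecreasing in `t`: differentiating, this is the
trapezoid inequality `φ v - φ u ≤ (v - u) (ψ u + ψ v) / 2` for the convex function `ψ = φ'`. -/

open Set Filter Topology Asymptotics

theorem hasDerivAt_abs_rpow_mul_self {r : ℝ} (hr : 0 < r) (x : ℝ) :
    HasDerivAt (fun x : ℝ => |x| ^ r * x) ((r + 1) * |x| ^ r) x := by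
  rcases eq_or_ne x 0 with rfl | hx
  · have hlim : Tendsto (fun h : ℝ => |h| ^ r) (𝓝 0) (𝓝 0) := by
      simpa [Real.zero_rpow hr.ne'] using
        (continuous_abs.rpow_const fun _ => Or.inr hr.le).tendsto (0 : ℝ)
    rw [hasDerivAt_iff_isLittleO_nhds_zero]
    simpa [Real.zero_rpow hr.ne'] using
      ((isLittleO_one_iff ℝ).2 hlim).mul_isBigO (isBigO_refl (fun h : ℝ => h) (𝓝 0))
  · have habs : |x| ≠ 0 := abs_ne_zero.2 hx
    refine (((hasDerivAt_abs hx).rpow_const (p := r) (Or.inl habs)).mul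
      (hasDerivAt_id' x)).congr_deriv ?_
    rw [Real.rpow_sub_one habs, show (SignType.sign x : ℝ) * r * (|x| ^ r / |x|) * x
      = r * (SignType.sign x * x) * |x| ^ r / |x| by ring, sign_mul_self]
    field_simp

theorem convexOn_abs_rpow {q : ℝ} (hq : 1 ≤ q) : ConvexOn ℝ univ fun x : ℝ => |x| ^ q := by
  refine ⟨convex_univ, fun x _ y _ a b ha hb hab => ?_⟩
  calc |a • x + b • y| ^ q ≤ (a • |x| + b • |y|) ^ q := by
        gcongr
        simpa [abs_of_nonneg ha, abs_of_nonneg hb] using abs_add_le (a * x) (b * y)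
    _ ≤ a • |x| ^ q + b • |y| ^ q :=
        (convexOn_rpow hq).2 (abs_nonneg x) (abs_nonneg y) ha hb hab

theorem ConvexOn.sub_le_trapezoid {φ ψ : ℝ → ℝ} {a b : ℝ} (hψ : ConvexOn ℝ (Icc a b) ψ)
    (hφ : ∀ x ∈ Icc a b, HasDerivAt φ (ψ x) x) (hab : a ≤ b) :
    φ b - φ a ≤ (b - a) * (ψ a + ψ b) / 2 := by
  rcases hab.eq_or_lt with rfl | hab
  · simp
  -- `G / (b - a)` is a primitive of the chord of `ψ` over `[a, b]`, minus `φ`.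
  set G : ℝ → ℝ := fun x =>
    (b - a) * ψ a * (x - a) + (ψ b - ψ a) * ((x - a) ^ 2 / 2) - (b - a) * φ x
  have hG : ∀ x ∈ Icc a b, HasDerivAt G ((b - x) * ψ a + (x - a) * ψ b - (b - a) * ψ x) x := by
    intro x hx
    have := ((((hasDerivAt_id' x).sub_const a).const_mul ((b - a) * ψ a)).fun_add
      ((((hasDerivAt_id' x).sub_const a).fun_pow 2).div_const 2 |>.const_mul (ψ b - ψ a))).fun_sub
      ((hφ x hx).const_mul (b - a))
    exact this.congr_deriv (by ring)
  have hGmono : MonotoneOn G (Icc a b) := by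
    refine monotoneOn_of_hasDerivWithinAt_nonneg (convex_Icc a b)
      (fun x hx => (hG x hx).continuousAt.continuousWithinAt)
      (fun x hx => (hG x (interior_subset hx)).hasDerivWithinAt) fun x hx => ?_
    rw [interior_Icc] at hx
    linarith [hψ.secant_mono_aux1 (left_mem_Icc.2 hab.le) (right_mem_Icc.2 hab.le) hx.1 hx.2]
  have := hGmono (left_mem_Icc.2 hab.le) (right_mem_Icc.2 hab.le) hab.le
  simp only [G, sub_self] at this
  nlinarith

section SymmetricSqrt

variable {f φ ψ : ℝ → ℝ}

theorem monotoneOn_symmetric_slope (hφ : ∀ x, HasDerivAt φ (ψ x) x) (hψ : ConvexOn ℝ univ ψ)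
    (a : ℝ) : MonotoneOn (fun t => (φ (a + t) - φ (a - t)) / t) (Ioi 0) := by
  have hN : ∀ t, HasDerivAt (fun t => φ (a + t) - φ (a - t)) (ψ (a + t) + ψ (a - t)) t := by
    intro t
    have h_add := (hφ (a + t)).comp t ((hasDerivAt_id' t).const_add a)
    have h_sub := (hφ (a - t)).comp t ((hasDerivAt_id' t).const_sub a)
    exact (h_add.fun_sub h_sub).congr_deriv (by ring)
  refine monotoneOn_of_hasDerivWithinAt_nonneg (convex_Ioi 0)
    (fun t ht => ((hN t).continuousAt.div continuousAt_id (ne_of_gt ht)).continuousWithinAt)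
    (fun t ht => ((hN t).div (hasDerivAt_id' t) (ne_of_gt (interior_subset ht))).hasDerivWithinAt)
    fun t ht => div_nonneg ?_ (sq_nonneg _)
  rw [interior_Ioi] at ht
  have := (hψ.subset (subset_univ _) (convex_Icc _ _)).sub_le_trapezoid (fun x _ => hφ x)
    (by linarith [mem_Ioi.1 ht] : a - t ≤ a + t)
  linarith

theorem hasDerivAt_symmetric_sqrt (hf : ∀ x, HasDerivAt f (φ x) x) (a : ℝ) {x : ℝ}
    (hx : 0 < x) :
    HasDerivAt (fun x => f (a + √x) + f (a - √x)) ((φ (a + √x) - φ (a - √x)) / √x / 2) x := by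
  have hsqrt := Real.hasDerivAt_sqrt hx.ne'
  have h_add := (hf (a + √x)).comp x (hsqrt.const_add a)
  have h_sub := (hf (a - √x)).comp x (hsqrt.const_sub a)
  refine (h_add.fun_add h_sub).congr_deriv ?_
  field_simp
  ring

theorem convexOn_symmetric_sqrt (hf : ∀ x, HasDerivAt f (φ x) x)
    (hφ : ∀ x, HasDerivAt φ (ψ x) x) (hψ : ConvexOn ℝ univ ψ) (a : ℝ) :
    ConvexOn ℝ (Ici 0) fun x => f (a + √x) + f (a - √x) := by
  have hfc : Continuous f := continuous_iff_continuousAt.2 fun x => (hf x).continuousAt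
  refine MonotoneOn.convexOn_of_deriv (convex_Ici 0) (by fun_prop) ?_ ?_ <;> rw [interior_Ici]
  · exact fun x hx => (hasDerivAt_symmetric_sqrt hf a hx).differentiableAt.differentiableWithinAt
  · intro x hx y hy hxy
    rw [(hasDerivAt_symmetric_sqrt hf a hx).deriv, (hasDerivAt_symmetric_sqrt hf a hy).deriv]
    exact div_le_div_of_nonneg_right (monotoneOn_symmetric_slope hφ hψ a
      (Real.sqrt_pos.2 hx) (Real.sqrt_pos.2 hy) (Real.sqrt_le_sqrt hxy)) zero_le_two

theorem monotoneOn_symmetric_sqrt (hf : ∀ x, HasDerivAt f (φ x) x) (hφ : Monotone φ) (a : ℝ) :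
    MonotoneOn (fun x => f (a + √x) + f (a - √x)) (Ici 0) := by
  have hfc : Continuous f := continuous_iff_continuousAt.2 fun x => (hf x).continuousAt
  refine monotoneOn_of_hasDerivWithinAt_nonneg (f' := fun x => (φ (a + √x) - φ (a - √x)) / √x / 2)
    (convex_Ici 0) (by fun_prop) ?_ ?_ <;> rw [interior_Ici]
  · exact fun x hx => (hasDerivAt_symmetric_sqrt hf a hx).hasDerivWithinAt
  · exact fun x _ => div_nonneg (div_nonneg (sub_nonneg.2 (hφ (by linarith [Real.sqrt_nonneg x])))
      (Real.sqrt_nonneg x)) zero_le_two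

end SymmetricSqrt

theorem stmt_8 (p a : ℝ) (hp : 3 ≤ p) :
    ConvexOn ℝ (Set.Ici 0) (fun x : ℝ => |a + Real.sqrt x| ^ p + |a - Real.sqrt x| ^ p)
    ∧ MonotoneOn (fun x : ℝ => |a + Real.sqrt x| ^ p + |a - Real.sqrt x| ^ p) (Set.Ici 0) := by
  have hf (s : ℝ) : HasDerivAt (fun s : ℝ => |s| ^ p) (p * (|s| ^ (p - 2) * s)) s :=
    (hasDerivAt_abs_rpow s (by linarith)).congr_deriv (mul_assoc _ _ _)
  have hφ (s : ℝ) :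
      HasDerivAt (fun s : ℝ => p * (|s| ^ (p - 2) * s)) (p * (p - 1) * |s| ^ (p - 2)) s :=
    ((hasDerivAt_abs_rpow_mul_self (by linarith) s).const_mul p).congr_deriv (by ring)
  have hψ : ConvexOn ℝ univ fun s : ℝ => p * (p - 1) * |s| ^ (p - 2) :=
    (convexOn_abs_rpow (by linarith)).smul (by nlinarith)
  exact ⟨convexOn_symmetric_sqrt hf hφ hψ a,
    monotoneOn_symmetric_sqrt hf
      (monotone_of_hasDerivAt_nonneg hφ fun s => mul_nonneg (by nlinarith) (by positivity)) a⟩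
end
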